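/- arXiv:1010.0524 — 7 statements merged into one kernel-verified Lean document; each statement's English description precedes it below -/
import Mathlib

section
/- If D is mixed Poisson(X) for a nonnegative random variable X (so its generating function is f(s) = E[e^{-X(1-s)}]), and there exist s* ∈ (0,1) and λ > 0 with f(s*) = e^{-λ(1-s*)}, then f(s) ≤ e^{-λ(1-s)} for all s ∈ [s*, 1]. -/
/-! With `θ = (1 - s) / (1 - s⋆) ∈ [0, 1]` we have `e^{-X(1-s)} = (e^{-X(1-s⋆)})^θ`, so Jensen's
inequality for the concave map `y ↦ y ^ θ` gives `f s ≤ (f s⋆)^θ = e^{-λ(1-s)}`. -/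

open MeasureTheory ProbabilityTheory Real

theorem Real.rpow_le_one_add {y θ : ℝ} (hy : 0 ≤ y) (hθ₀ : 0 ≤ θ) (hθ₁ : θ ≤ 1) :
    y ^ θ ≤ 1 + y := by
  rcases le_total y 1 with hy1 | hy1
  · linarith [rpow_le_one hy hy1 hθ₀]
  · linarith [rpow_le_self_of_one_le hy1 hθ₁]

namespace MeasureTheory

variable {Ω : Type*} [MeasurableSpace Ω] {μ : Measure Ω} {Y : Ω → ℝ} {θ : ℝ}

theorem Integrable.rpow_const_of_le_one [IsFiniteMeasure μ] (hY : Integrable Y μ)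
    (hY₀ : 0 ≤ᵐ[μ] Y) (hθ₀ : 0 ≤ θ) (hθ₁ : θ ≤ 1) : Integrable (fun ω ↦ Y ω ^ θ) μ := by
  have hcont : Continuous fun y : ℝ ↦ y ^ θ := continuous_id.rpow_const fun _ ↦ Or.inr hθ₀
  refine ((integrable_const 1).add hY).mono' (hcont.comp_aestronglyMeasurable hY.1) ?_
  filter_upwards [hY₀] with ω hω
  rw [norm_of_nonneg (rpow_nonneg hω θ)]
  exact rpow_le_one_add hω hθ₀ hθ₁

theorem integral_rpow_le_rpow_integral [IsProbabilityMeasure μ] (hY : Integrable Y μ)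
    (hY₀ : 0 ≤ᵐ[μ] Y) (hθ₀ : 0 ≤ θ) (hθ₁ : θ ≤ 1) :
    ∫ ω, Y ω ^ θ ∂μ ≤ (∫ ω, Y ω ∂μ) ^ θ :=
  (concaveOn_rpow hθ₀ hθ₁).le_map_integral
    (continuous_id.rpow_const fun _ ↦ Or.inr hθ₀).continuousOn isClosed_Ici hY₀ hY
    (hY.rpow_const_of_le_one hY₀ hθ₀ hθ₁)

end MeasureTheory

theorem mixedPoisson_pgf_below_exponential_general
    {Ω : Type*} [MeasureSpace Ω] [IsProbabilityMeasure (ℙ : Measure Ω)]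
    (X : Ω → ℝ)
    (f : ℝ → ℝ) (hf : ∀ s, f s = ∫ ω, Real.exp (-(X ω) * (1 - s)))
    (sstar lam : ℝ) (hs : sstar ∈ Set.Ioo (0 : ℝ) 1)
    (hcross : f sstar = Real.exp (-lam * (1 - sstar))) :
    ∀ s ∈ Set.Icc sstar 1, f s ≤ Real.exp (-lam * (1 - s)) := by
  intro s ⟨hs_ge, hs_le⟩
  have hgap : 0 < 1 - sstar := by linarith [hs.2]
  set θ := (1 - s) / (1 - sstar)
  have hpow : ∀ x, exp (-x * (1 - s)) = exp (-x * (1 - sstar)) ^ θ := fun x ↦ by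
    rw [← exp_mul, mul_assoc, mul_div_cancel₀ _ hgap.ne']
  -- A non-integrable function has Bochner integral `0`, whereas `f s⋆ > 0`.
  have hint : Integrable fun ω ↦ exp (-(X ω) * (1 - sstar)) :=
    Integrable.of_integral_ne_zero (by rw [← hf, hcross]; positivity)
  calc f s = ∫ ω, exp (-(X ω) * (1 - sstar)) ^ θ := by simp only [hf, hpow]
    _ ≤ (∫ ω, exp (-(X ω) * (1 - sstar))) ^ θ :=
      integral_rpow_le_rpow_integral hint (.of_forall fun _ ↦ (exp_pos _).le)
        (div_nonneg (by linarith) hgap.le) (div_le_one_of_le₀ (by linarith) hgap.le)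
    _ = exp (-lam * (1 - s)) := by rw [← hf, hcross, hpow]

theorem mixedPoisson_pgf_below_exponential
    {Ω : Type*} [MeasureSpace Ω] [IsProbabilityMeasure (ℙ : Measure Ω)]
    (X : Ω → ℝ) (hXmeas : Measurable X) (hXpos : ∀ ω, 0 ≤ X ω)
    (hXint : Integrable X)
    (f : ℝ → ℝ) (hf : ∀ s, f s = ∫ ω, Real.exp (-(X ω) * (1 - s)))
    (sstar lam : ℝ) (hs : sstar ∈ Set.Ioo (0 : ℝ) 1) (hlam : 0 < lam)
    (hcross : f sstar = Real.exp (-lam * (1 - sstar))) :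
    ∀ s ∈ Set.Icc sstar 1, f s ≤ Real.exp (-lam * (1 - s)) :=
  mixedPoisson_pgf_below_exponential_general X f hf sstar lam hs hcross
end

section
/- Suppose X is a nonnegative random variable with f(s) = E[e^{-X(1-s)}] and derivative at s* ∈ (0,1) satisfying f'(s*) ≥ λ e^{-λ(1-s*)} and f(s*) = e^{-λ(1-s*)}. Then for every positive integer k, the k-th derivative satisfies f^{(k)}(s*) = E[X^k e^{-X(1-s*)}] ≥ λ^k e^{-λ(1-s*)}. -/
/-!
Differentiating under the integral sign, `f⁽ᵏ⁾(s) = E[X ^ k e^{-X(1-s)}]` for every `s < 1`, the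
moments of `X` dominating the derivatives. Under the exponential tilt of `ℙ` by `-X (1 - s*)`, the
probability measure with density `e^{-X(1-s*)} / f(s*)`, Jensen's inequality for `t ↦ t ^ k` reads
`f⁽ᵏ⁾(s*) ≥ f(s*) (f'(s*) / f(s*)) ^ k`, and the hypotheses give `f(s*) = e^{-λ(1-s*)}` and
`f'(s*) / f(s*) ≥ λ`.
-/

open MeasureTheory ProbabilityTheory Real

theorem integral_exp_mul_pow_le_integral_pow_mul_exp {Ω : Type*} [MeasurableSpace Ω]
    {μ : Measure Ω} [NeZero μ] {A φ : Ω → ℝ} (k : ℕ) (hA : 0 ≤ᵐ[μ] A)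
    (hφ : Integrable (fun ω => exp (φ ω)) μ) (hA₁ : Integrable (fun ω => A ω * exp (φ ω)) μ)
    (hAk : Integrable (fun ω => A ω ^ k * exp (φ ω)) μ) :
    (∫ ω, exp (φ ω) ∂μ) * ((∫ ω, A ω * exp (φ ω) ∂μ) / ∫ ω, exp (φ ω) ∂μ) ^ k ≤
      ∫ ω, A ω ^ k * exp (φ ω) ∂μ := by
  set Z := ∫ ω, exp (φ ω) ∂μ
  have hZ : 0 < Z := integral_exp_pos hφ
  have := isProbabilityMeasure_tilted hφ
  have integral_tilted_eq (g : Ω → ℝ) :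
      ∫ ω, g ω ∂μ.tilted φ = (∫ ω, g ω * exp (φ ω) ∂μ) / Z := by
    rw [integral_tilted, ← integral_div]
    congr 1 with ω
    rw [smul_eq_mul]
    ring
  have integrable_tilted {g : Ω → ℝ} (hg : Integrable (fun ω => g ω * exp (φ ω)) μ) :
      Integrable g (μ.tilted φ) :=
    (integrable_tilted_iff hφ g).2 (by simpa only [smul_eq_mul, mul_comm] using hg)
  have jensen : (∫ ω, A ω ∂μ.tilted φ) ^ k ≤ ∫ ω, A ω ^ k ∂μ.tilted φ :=
    (convexOn_pow k).map_integral_le (continuous_pow k).continuousOn isClosed_Ici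
      ((tilted_absolutelyContinuous μ φ).ae_le hA) (integrable_tilted hA₁) (integrable_tilted hAk)
  rwa [integral_tilted_eq, integral_tilted_eq, le_div_iff₀ hZ, mul_comm] at jensen

section MixedPoisson

variable {Ω : Type*} [MeasurableSpace Ω] {μ : Measure Ω} {X : Ω → ℝ}

lemma exp_neg_mul_one_sub_le_one {x s : ℝ} (hx : 0 ≤ x) (hs : s ≤ 1) :
    exp (-x * (1 - s)) ≤ 1 :=
  exp_le_one_iff.2 (by nlinarith)

lemma integrable_pow_mul_exp_neg_mul_one_sub (hX : AEMeasurable X μ) (hX₀ : 0 ≤ᵐ[μ] X) {k : ℕ}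
    (hXk : Integrable (fun ω => X ω ^ k) μ) {s : ℝ} (hs : s ≤ 1) :
    Integrable (fun ω => X ω ^ k * exp (-X ω * (1 - s))) μ :=
  hXk.mul_bdd (by fun_prop) <| hX₀.mono fun ω hω => by
    rw [norm_of_nonneg (exp_pos _).le]
    exact exp_neg_mul_one_sub_le_one hω hs

lemma hasDerivAt_integral_pow_mul_exp_neg_mul_one_sub (hX : AEMeasurable X μ)
    (hX₀ : 0 ≤ᵐ[μ] X) (hXmom : ∀ k : ℕ, Integrable (fun ω => X ω ^ k) μ) (k : ℕ) {s : ℝ}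
    (hs : s < 1) :
    HasDerivAt (fun t => ∫ ω, X ω ^ k * exp (-X ω * (1 - t)) ∂μ)
      (∫ ω, X ω ^ (k + 1) * exp (-X ω * (1 - s)) ∂μ) s := by
  refine (hasDerivAt_integral_of_dominated_loc_of_deriv_le
    (F := fun t ω => X ω ^ k * exp (-X ω * (1 - t)))
    (F' := fun t ω => X ω ^ (k + 1) * exp (-X ω * (1 - t))) (bound := fun ω => X ω ^ (k + 1))
    (Iio_mem_nhds hs) (.of_forall fun t => by fun_prop)
    (integrable_pow_mul_exp_neg_mul_one_sub hX hX₀ (hXmom k) hs.le) (by fun_prop) ?_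
    (hXmom (k + 1)) (.of_forall fun ω t _ => ?_)).2
  · filter_upwards [hX₀] with ω hω t ht
    rw [norm_of_nonneg (mul_nonneg (pow_nonneg hω _) (exp_pos _).le)]
    exact mul_le_of_le_one_right (pow_nonneg hω _) (exp_neg_mul_one_sub_le_one hω (le_of_lt ht))
  · exact ((((hasDerivAt_id' t).const_sub 1).const_mul (-X ω)).exp.const_mul (X ω ^ k)).congr_deriv
      (by ring)

theorem iteratedDeriv_eq_integral_pow_mul_exp_neg_mul_one_sub (hX : AEMeasurable X μ)
    (hX₀ : 0 ≤ᵐ[μ] X) (hXmom : ∀ k : ℕ, Integrable (fun ω => X ω ^ k) μ) {f : ℝ → ℝ}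
    (hf : ∀ s, f s = ∫ ω, exp (-X ω * (1 - s)) ∂μ) (k : ℕ) {s : ℝ} (hs : s < 1) :
    iteratedDeriv k f s = ∫ ω, X ω ^ k * exp (-X ω * (1 - s)) ∂μ := by
  induction k generalizing s with
  | zero => simp [hf]
  | succ k ih =>
    have hfk : iteratedDeriv k f =ᶠ[nhds s] fun t => ∫ ω, X ω ^ k * exp (-X ω * (1 - t)) ∂μ := by
      filter_upwards [Iio_mem_nhds hs] with t ht using ih ht
    rw [iteratedDeriv_succ, hfk.deriv_eq]
    exact (hasDerivAt_integral_pow_mul_exp_neg_mul_one_sub hX hX₀ hXmom k hs).deriv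

end MixedPoisson

theorem mixedPoisson_iteratedDeriv_bound
    {Ω : Type*} [MeasureSpace Ω] [IsProbabilityMeasure (ℙ : Measure Ω)]
    (X : Ω → ℝ) (hXmeas : Measurable X) (hXpos : ∀ ω, 0 ≤ X ω)
    (hXmom : ∀ k : ℕ, Integrable (fun ω => X ω ^ k))
    (f : ℝ → ℝ) (hf : ∀ s, f s = ∫ ω, Real.exp (-(X ω) * (1 - s)))
    (sstar lam : ℝ) (hs : sstar ∈ Set.Ioo (0 : ℝ) 1) (hlam : 0 < lam)
    (hderiv : deriv f sstar ≥ lam * Real.exp (-lam * (1 - sstar)))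
    (hcross : f sstar = Real.exp (-lam * (1 - sstar))) :
    ∀ k : ℕ, 1 ≤ k →
      iteratedDeriv k f sstar = ∫ ω, (X ω) ^ k * Real.exp (-(X ω) * (1 - sstar)) ∧
      iteratedDeriv k f sstar ≥ lam ^ k * Real.exp (-lam * (1 - sstar)) := by
  intro k _
  have hX₀ : 0 ≤ᵐ[ℙ] X := ae_of_all _ hXpos
  have moment (n : ℕ) := iteratedDeriv_eq_integral_pow_mul_exp_neg_mul_one_sub
    hXmeas.aemeasurable hX₀ hXmom hf n hs.2
  have integrable (n : ℕ) :=
    integrable_pow_mul_exp_neg_mul_one_sub hXmeas.aemeasurable hX₀ (hXmom n) hs.2.le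
  refine ⟨moment k, ?_⟩
  set c := exp (-lam * (1 - sstar))
  have mass : ∫ ω, exp (-X ω * (1 - sstar)) = c := by rw [← hcross, hf]
  have mean : lam ≤ (∫ ω, X ω * exp (-X ω * (1 - sstar))) / c := by
    rw [← iteratedDeriv_one, moment 1] at hderiv
    rw [le_div_iff₀ (exp_pos _)]
    simpa only [pow_one, ge_iff_le] using hderiv
  calc lam ^ k * c ≤ c * ((∫ ω, X ω * exp (-X ω * (1 - sstar))) / c) ^ k := by
        rw [mul_comm]; gcongr
    _ ≤ iteratedDeriv k f sstar := by
      rw [moment k, ← mass]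
      exact integral_exp_mul_pow_le_integral_pow_mul_exp k hX₀ (by simpa using integrable 0)
        (by simpa using integrable 1) (integrable k)
end

section
/- Let μ > 0, λ ≥ max(μ,1), z(λ) the unique root in (0,1) of z = e^{-λ(1-z)} (take z(λ)=1 when λ ≤ 1) and define q(λ) = 1 - μ/λ + (μ/λ)e^{-λ(1-z(λ))} = 1 - (μ/λ)(1 - z(λ)). Then the stationary points of λ ↦ q(λ) on (1,∞) occur exactly where z(λ) = 1/(2λ). -/
/-!
For `y ∈ (0, 1)` the fixed-point equation `y = exp (-l * (1 - y))` says exactly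
`l = log y / (y - 1)`. This function of `y` is strictly decreasing on `(0, 1)`, with derivative
`(l y - 1) / (y (1 - y)) < 0`, so `z` is its inverse on `(1, ∞)` and the inverse function theorem
gives `z' = z (1 - z) / (l z - 1)`. Differentiating `q = 1 - (μ / l) (1 - z)` then yields
`q' = μ (1 - z) (2 l z - 1) / (l² (l z - 1))`, which vanishes exactly when `2 l z = 1`.
-/

open Real Set Filter Topology

noncomputable def rateOfRoot (y : ℝ) : ℝ := log y / (y - 1)

lemma sub_one_div_lt_log {x : ℝ} (hx : 0 < x) (hx1 : x ≠ 1) : (x - 1) / x < log x := by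
  have h := log_lt_sub_one_of_pos (inv_pos.2 hx) (inv_ne_one.2 hx1)
  rw [log_inv] at h
  have : (x - 1) / x = 1 - x⁻¹ := by field_simp
  linarith

lemma rateOfRoot_eq_of_eq_exp {y l : ℝ} (hy1 : y ≠ 1) (h : y = exp (-l * (1 - y))) :
    rateOfRoot y = l := by
  have hlog : log y = -l * (1 - y) := by rw [congrArg log h, log_exp]
  rw [rateOfRoot, hlog, div_eq_iff (sub_ne_zero.2 hy1)]
  ring

lemma one_lt_rateOfRoot {y : ℝ} (hy : y ∈ Ioo 0 1) : 1 < rateOfRoot y := by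
  rw [rateOfRoot, lt_div_iff_of_neg (by linarith [hy.2])]
  linarith [log_lt_sub_one_of_pos hy.1 hy.2.ne]

lemma rateOfRoot_mul_lt_one {y : ℝ} (hy : y ∈ Ioo 0 1) : rateOfRoot y * y < 1 := by
  rw [rateOfRoot, div_mul_eq_mul_div, div_lt_one_of_neg (by linarith [hy.2]),
    ← div_lt_iff₀ hy.1]
  exact sub_one_div_lt_log hy.1 hy.2.ne

lemma hasDerivAt_rateOfRoot {y : ℝ} (hy : y ∈ Ioo 0 1) :
    HasDerivAt rateOfRoot ((rateOfRoot y * y - 1) / (y * (1 - y))) y := by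
  have hy0 := hy.1.ne'
  have hy1 := sub_ne_zero.2 hy.2.ne
  have hy1' := sub_ne_zero.2 hy.2.ne'
  refine ((hasDerivAt_log hy0).div ((hasDerivAt_id' y).sub_const 1) hy1).congr_deriv ?_
  rw [rateOfRoot]
  field_simp
  ring

lemma strictAntiOn_rateOfRoot : StrictAntiOn rateOfRoot (Ioo 0 1) := by
  refine strictAntiOn_of_hasDerivWithinAt_neg (convex_Ioo 0 1)
    (f' := fun y => (rateOfRoot y * y - 1) / (y * (1 - y)))
    (fun y hy => (hasDerivAt_rateOfRoot hy).continuousAt.continuousWithinAt)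
    (fun y hy => ?_) (fun y hy => ?_) <;> rw [interior_Ioo] at hy
  · exact (hasDerivAt_rateOfRoot hy).hasDerivWithinAt
  · exact div_neg_of_neg_of_pos (by linarith [rateOfRoot_mul_lt_one hy])
      (mul_pos hy.1 (by linarith [hy.2]))

def IsNontrivialFixedPoint (z : ℝ → ℝ) : Prop :=
  ∀ l : ℝ, 1 < l → z l ∈ Ioo (0 : ℝ) 1 ∧ z l = exp (-l * (1 - z l))

namespace IsNontrivialFixedPoint

variable {z : ℝ → ℝ} {l : ℝ}

lemma rateOfRoot_eq (hz : IsNontrivialFixedPoint z) (hl : 1 < l) : rateOfRoot (z l) = l :=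
  rateOfRoot_eq_of_eq_exp (hz l hl).1.2.ne (hz l hl).2

lemma mul_lt_one (hz : IsNontrivialFixedPoint z) (hl : 1 < l) : l * z l < 1 := by
  simpa only [hz.rateOfRoot_eq hl] using rateOfRoot_mul_lt_one (hz l hl).1

lemma strictAntiOn (hz : IsNontrivialFixedPoint z) : StrictAntiOn z (Ioi 1) := by
  intro a ha b hb hab
  rwa [← strictAntiOn_rateOfRoot.lt_iff_gt (hz a ha).1 (hz b hb).1, hz.rateOfRoot_eq ha,
    hz.rateOfRoot_eq hb]

lemma surjOn (hz : IsNontrivialFixedPoint z) : SurjOn z (Ioi 1) (Ioo 0 1) := by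
  intro y hy
  have hl := one_lt_rateOfRoot hy
  exact ⟨rateOfRoot y, hl, strictAntiOn_rateOfRoot.injOn (hz _ hl).1 hy (hz.rateOfRoot_eq hl)⟩

-- `-z` is strictly monotone and its image `(-1, 0)` is open, which forces continuity.
lemma continuousAt (hz : IsNontrivialFixedPoint z) (hl : 1 < l) : ContinuousAt z l := by
  have hmono : StrictMonoOn (-z) (Ioi 1) := fun a ha b hb hab =>
    neg_lt_neg (hz.strictAntiOn ha hb hab)
  have himage : (-z) '' Ioi 1 ∈ 𝓝 ((-z) l) := by
    rw [Pi.neg_apply]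
    refine mem_of_superset (Ioo_mem_nhds (a := -1) (b := 0) ?_ ?_) fun y hy => ?_
    · linarith [(hz l hl).1.2]
    · linarith [(hz l hl).1.1]
    · obtain ⟨x, hx, hxy⟩ :=
        hz.surjOn (show -y ∈ Ioo 0 1 from ⟨by linarith [hy.2], by linarith [hy.1]⟩)
      exact ⟨x, hx, by simp [hxy]⟩
  have h := (hmono.continuousAt_of_image_mem_nhds (Ioi_mem_nhds hl) himage).neg
  rwa [neg_neg] at h

lemma hasDerivAt (hz : IsNontrivialFixedPoint z) (hl : 1 < l) :
    HasDerivAt z (z l * (1 - z l) / (l * z l - 1)) l := by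
  have hderiv := hasDerivAt_rateOfRoot (hz l hl).1
  rw [hz.rateOfRoot_eq hl] at hderiv
  rw [← inv_div]
  exact hderiv.of_local_left_inverse (hz.continuousAt hl)
    (div_ne_zero (sub_ne_zero.2 (hz.mul_lt_one hl).ne)
      (mul_pos (hz l hl).1.1 (sub_pos.2 (hz l hl).1.2)).ne')
    ((eventually_gt_nhds hl).mono fun x hx => hz.rateOfRoot_eq hx)

lemma hasDerivAt_nonExtinction (hz : IsNontrivialFixedPoint z) (hl : 1 < l) (μ : ℝ) :
    HasDerivAt (fun x => 1 - μ / x * (1 - z x))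
      (μ * (1 - z l) * (2 * l * z l - 1) / (l ^ 2 * (l * z l - 1))) l := by
  have hl0 : l ≠ 0 := by positivity
  have hden : l * z l - 1 ≠ 0 := sub_ne_zero.2 (hz.mul_lt_one hl).ne
  refine ((((hasDerivAt_inv hl0).const_mul μ).mul
    ((hz.hasDerivAt hl).const_sub 1)).const_sub 1).congr_deriv ?_
  field_simp
  ring

end IsNontrivialFixedPoint

theorem stationary_points_of_q (μ : ℝ) (hμ : 0 < μ)
    (z : ℝ → ℝ)
    (hz : ∀ l : ℝ, 1 < l → z l ∈ Set.Ioo (0 : ℝ) 1 ∧ z l = Real.exp (-l * (1 - z l)))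
    (q : ℝ → ℝ) (hq : ∀ l, q l = 1 - (μ / l) * (1 - z l)) :
    ∀ l : ℝ, 1 < l → max μ 1 ≤ l → (deriv q l = 0 ↔ z l = 1 / (2 * l)) := by
  intro l hl _
  have hz' : IsNontrivialFixedPoint z := hz
  have hnum : μ * (1 - z l) ≠ 0 := mul_ne_zero hμ.ne' (sub_ne_zero.2 (hz l hl).1.2.ne')
  have hden : l ^ 2 * (l * z l - 1) ≠ 0 :=
    mul_ne_zero (by positivity) (sub_ne_zero.2 (hz'.mul_lt_one hl).ne)
  rw [show q = fun x => 1 - μ / x * (1 - z x) from funext hq,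
    (hz'.hasDerivAt_nonExtinction hl μ).deriv, div_eq_zero_iff, or_iff_left hden, mul_eq_zero,
    or_iff_right hnum, sub_eq_zero, eq_div_iff (by positivity), mul_comm (z l)]
end

section
/- For any nonnegative integer-valued random variable D with E[D] = μ > 0 and any x ∈ [0,1], E[x^D] ≥ (1 − β) x^k + β x^{k+1}, where k = ⌊μ⌋ and β = μ − k. -/
/-!
The map `n ↦ x ^ n` on `ℕ` is convex for `x ∈ [0, 1]`: its increments `x ^ n * (x - 1)` are
nondecreasing. A discrete convex function lies above the line through its values at `k` and
`k + 1`, so `x ^ D ≥ x ^ k + (D - k) * (x ^ (k + 1) - x ^ k)` pointwise, and taking expectations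
with `k = ⌊μ⌋` gives exactly the two-point generating function on the right.
-/

open MeasureTheory ProbabilityTheory

section DiscreteConvex

variable {f : ℕ → ℝ}

lemma add_mul_sub_le_of_monotone_sub (hf : Monotone fun n => f (n + 1) - f n) (k m : ℕ) :
    f k + m * (f (k + 1) - f k) ≤ f (k + m) := by
  induction m with
  | zero => simp
  | succ m ih =>
    have hstep : f (k + 1) - f k ≤ f (k + m + 1) - f (k + m) := hf (Nat.le_add_right k m)
    rw [← add_assoc]
    push_cast
    linarith

lemma sub_mul_sub_le_of_monotone_sub (hf : Monotone fun n => f (n + 1) - f n) (n m : ℕ) :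
    f (n + m) - m * (f (n + m + 1) - f (n + m)) ≤ f n := by
  induction m with
  | zero => simp
  | succ m ih =>
    have hstep : f (n + m + 1) - f (n + m) ≤ f (n + m + 1 + 1) - f (n + m + 1) :=
      hf (Nat.le_succ _)
    rw [← add_assoc]
    push_cast
    nlinarith [mul_le_mul_of_nonneg_left hstep (Nat.cast_nonneg (α := ℝ) m)]

lemma add_sub_mul_le_of_monotone_sub (hf : Monotone fun n => f (n + 1) - f n) (k n : ℕ) :
    f k + ((n : ℝ) - k) * (f (k + 1) - f k) ≤ f n := by
  rcases le_total k n with hkn | hnk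
  · obtain ⟨m, rfl⟩ := Nat.exists_eq_add_of_le hkn
    push_cast
    simpa using add_mul_sub_le_of_monotone_sub hf k m
  · obtain ⟨m, rfl⟩ := Nat.exists_eq_add_of_le hnk
    push_cast
    linarith [sub_mul_sub_le_of_monotone_sub hf n m]

lemma add_sub_mul_le_integral_of_monotone_sub {Ω : Type*} [MeasurableSpace Ω] {P : Measure Ω}
    [IsProbabilityMeasure P] (hf : Monotone fun n => f (n + 1) - f n) {D : Ω → ℕ}
    (hD : Integrable (fun ω => (D ω : ℝ)) P) (hfD : Integrable (fun ω => f (D ω)) P) (k : ℕ) :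
    f k + ((∫ ω, (D ω : ℝ) ∂P) - k) * (f (k + 1) - f k) ≤ ∫ ω, f (D ω) ∂P := by
  have hline : Integrable (fun ω => ((D ω : ℝ) - k) * (f (k + 1) - f k)) P :=
    (hD.sub (integrable_const _)).mul_const _
  calc f k + ((∫ ω, (D ω : ℝ) ∂P) - k) * (f (k + 1) - f k)
      = ∫ ω, (f k + ((D ω : ℝ) - k) * (f (k + 1) - f k)) ∂P := by
        rw [integral_add (integrable_const _) hline, integral_mul_const,
          integral_sub hD (integrable_const _)]
        simp
    _ ≤ ∫ ω, f (D ω) ∂P :=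
        integral_mono ((integrable_const _).add hline) hfD
          fun ω => add_sub_mul_le_of_monotone_sub hf k (D ω)

end DiscreteConvex

lemma monotone_pow_succ_sub_pow {x : ℝ} (h0 : 0 ≤ x) (h1 : x ≤ 1) :
    Monotone fun n : ℕ => x ^ (n + 1) - x ^ n := by
  intro m n hmn
  have hanti : x ^ n ≤ x ^ m := pow_le_pow_of_le_one h0 h1 hmn
  simp only [pow_succ, ← mul_sub_one]
  nlinarith

theorem pgf_two_point_lower_bound_general
    {Ω : Type*} [MeasureSpace Ω] [IsProbabilityMeasure (ℙ : Measure Ω)]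
    (D : Ω → ℕ) (hD : Measurable D)
    (hint : Integrable (fun ω => (D ω : ℝ)))
    (μ : ℝ) (hμ : μ = ∫ ω, (D ω : ℝ)) :
    ∀ x ∈ Set.Icc (0 : ℝ) 1,
      ∫ ω, x ^ D ω ≥
        (1 - (μ - ⌊μ⌋₊)) * x ^ (⌊μ⌋₊) + (μ - ⌊μ⌋₊) * x ^ (⌊μ⌋₊ + 1) := by
  rintro x ⟨h0, h1⟩
  have hpgf : Integrable (fun ω => x ^ D ω) :=
    Integrable.of_bound (measurable_const.pow hD).aestronglyMeasurable 1
      (ae_of_all _ fun ω => by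
        rw [Real.norm_eq_abs, abs_of_nonneg (pow_nonneg h0 _)]
        exact pow_le_one₀ h0 h1)
  have key := add_sub_mul_le_integral_of_monotone_sub (monotone_pow_succ_sub_pow h0 h1) hint hpgf
    ⌊μ⌋₊
  rw [← hμ] at key
  linarith

theorem pgf_two_point_lower_bound
    {Ω : Type*} [MeasureSpace Ω] [IsProbabilityMeasure (ℙ : Measure Ω)]
    (D : Ω → ℕ) (hD : Measurable D)
    (hint : Integrable (fun ω => (D ω : ℝ)))
    (μ : ℝ) (hμ : μ = ∫ ω, (D ω : ℝ)) (hμpos : 0 < μ) :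
    ∀ x ∈ Set.Icc (0 : ℝ) 1,
      ∫ ω, x ^ D ω ≥
        (1 - (μ - ⌊μ⌋₊)) * x ^ (⌊μ⌋₊) + (μ - ⌊μ⌋₊) * x ^ (⌊μ⌋₊ + 1) :=
  pgf_two_point_lower_bound_general D hD hint μ hμ
end

section
/- Let f̄ and f̄† be as follows: f̄(s) = Σ_{m≥0} p_m s^m a probability generating function and f̄†(s) = (1−α)s^{k−1} + α s^k with k ≥ 1 and α ∈ [0,1]. If f̄(z) = f̄†(z) for some z ∈ (0,1) and f̄(1) = f̄†(1) = 1, then f̄(s) ≤ f̄†(s) for all s ∈ [z, 1]. -/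
/-!
Write `k = n + 1`. Dividing by `s ^ n` turns `f̄†` into the affine function `1 - α + α s` and
`f̄` into `∑ pₘ s^(m - n)`, a nonnegative combination of the convex functions `s ↦ s^(m - n)` on
`(0, 1]`. The two agree at `z` and at `1`, so the affine function is a chord of the convex one,
which therefore lies below it on `[z, 1]`.
-/

open Set

theorem ConvexOn.tsum {ι E : Type*} [AddCommMonoid E] [Module ℝ E] {s : Set E}
    {f : ι → E → ℝ} (hs : Convex ℝ s) (hf : ∀ i, ConvexOn ℝ s (f i))
    (hsum : ∀ x ∈ s, Summable fun i => f i x) : ConvexOn ℝ s fun x => ∑' i, f i x := by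
  refine ⟨hs, fun x hx y hy a b ha hb hab => ?_⟩
  have hsum_ax := (hsum x hx).mul_left a
  have hsum_by := (hsum y hy).mul_left b
  calc ∑' i, f i (a • x + b • y) ≤ ∑' i, (a * f i x + b * f i y) :=
        (hsum _ (hs hx hy ha hb hab)).tsum_le_tsum (fun i => (hf i).2 hx hy ha hb hab)
          (hsum_ax.add hsum_by)
    _ = a • ∑' i, f i x + b • ∑' i, f i y := by
      rw [hsum_ax.tsum_add hsum_by, tsum_mul_left, tsum_mul_left, smul_eq_mul, smul_eq_mul]

theorem ConvexOn.le_affine_of_mem_Icc {s : Set ℝ} {f : ℝ → ℝ} (hf : ConvexOn ℝ s f)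
    {c d x y t : ℝ} (hx : x ∈ s) (hy : y ∈ s) (hfx : f x ≤ c + d * x) (hfy : f y ≤ c + d * y)
    (ht : t ∈ Icc x y) : f t ≤ c + d * t := by
  have hg : ConvexOn ℝ s (f - fun u => c + d * u) :=
    hf.sub ((concaveOn_const c hf.1).add ((LinearMap.mulLeft ℝ d).concaveOn hf.1))
  exact sub_nonpos.1 <| (hg.le_on_segment hx hy (segment_eq_Icc (ht.1.trans ht.2) ▸ ht)).trans
    (max_le (sub_nonpos.2 hfx) (sub_nonpos.2 hfy))

theorem summable_mul_pow_of_abs_le_one {p : ℕ → ℝ} (hp : Summable p) {s : ℝ} (hs : |s| ≤ 1) :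
    Summable fun m => p m * s ^ m :=
  hp.abs.of_norm_bounded fun m => by
    rw [Real.norm_eq_abs, abs_mul, abs_pow]
    exact mul_le_of_le_one_right (abs_nonneg _) (pow_le_one₀ (abs_nonneg s) hs)

theorem tsum_mul_zpow_natCast_sub {𝕜 : Type*} [DivisionRing 𝕜] [TopologicalSpace 𝕜]
    [IsTopologicalRing 𝕜] [T2Space 𝕜] (p : ℕ → 𝕜) {s : 𝕜} (hs : s ≠ 0) (n : ℕ) :
    ∑' m, p m * s ^ ((m : ℤ) - n) = (∑' m, p m * s ^ m) / s ^ n := by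
  rw [← tsum_div_const]
  congr 1 with m
  rw [zpow_sub₀ hs, zpow_natCast, zpow_natCast, mul_div_assoc]

theorem convexOn_tsum_mul_zpow_natCast_sub {p : ℕ → ℝ} (hp : ∀ m, 0 ≤ p m) (hpsum : Summable p)
    (n : ℕ) : ConvexOn ℝ (Ioc 0 1) fun s => ∑' m, p m * s ^ ((m : ℤ) - n) := by
  refine ConvexOn.tsum (convex_Ioc 0 1)
    (fun m => ((convexOn_zpow _).subset Ioc_subset_Ioi_self (convex_Ioc 0 1)).smul (hp m))
    fun s hs => ?_
  have hs' : |s| ≤ 1 := abs_le.2 ⟨by linarith [hs.1], hs.2⟩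
  refine ((summable_mul_pow_of_abs_le_one hpsum hs').div_const (s ^ n)).congr fun m => ?_
  rw [zpow_sub₀ hs.1.ne', zpow_natCast, zpow_natCast, mul_div_assoc]

theorem pgf_dominated_by_two_point_general (p : ℕ → ℝ) (hp : ∀ m, 0 ≤ p m)
    (hpsum : Summable p) (hp1 : ∑' m, p m = 1)
    (k : ℕ) (hk : 1 ≤ k) (α : ℝ)
    (fbar fdag : ℝ → ℝ)
    (hfbar : ∀ s, fbar s = ∑' m, p m * s ^ m)
    (hfdag : ∀ s, fdag s = (1 - α) * s ^ (k - 1) + α * s ^ k)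
    (z : ℝ) (hz : z ∈ Set.Ioo (0 : ℝ) 1) (heq : fbar z = fdag z) :
    ∀ s ∈ Set.Icc z 1, fbar s ≤ fdag s := by
  obtain ⟨n, rfl⟩ : ∃ n, k = n + 1 := ⟨k - 1, by omega⟩
  have hfdag' : ∀ s, fdag s = (1 - α + α * s) * s ^ n := fun s => by
    rw [hfdag, Nat.add_sub_cancel]; ring
  have hconv : ConvexOn ℝ (Ioc 0 1) fun s => fbar s / s ^ n :=
    (convexOn_tsum_mul_zpow_natCast_sub hp hpsum n).congr fun s hs =>
      (tsum_mul_zpow_natCast_sub p hs.1.ne' n).trans (by rw [hfbar])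
  have hz_pow : 0 < z ^ n := pow_pos hz.1 n
  have hchord_z : fbar z / z ^ n ≤ 1 - α + α * z := by
    rw [heq, hfdag', mul_div_cancel_right₀ _ hz_pow.ne']
  have hchord_one : fbar 1 / 1 ^ n ≤ 1 - α + α * 1 := by
    simp [hfbar, hp1]
  rintro s ⟨hzs, hs1⟩
  have hs_pow : 0 < s ^ n := pow_pos (hz.1.trans_le hzs) n
  have := hconv.le_affine_of_mem_Icc ⟨hz.1, hz.2.le⟩ ⟨one_pos, le_rfl⟩ hchord_z hchord_one
    ⟨hzs, hs1⟩
  rwa [div_le_iff₀ hs_pow, ← hfdag'] at this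

theorem pgf_dominated_by_two_point (p : ℕ → ℝ) (hp : ∀ m, 0 ≤ p m)
    (hpsum : Summable p) (hp1 : ∑' m, p m = 1)
    (k : ℕ) (hk : 1 ≤ k) (α : ℝ) (hα : α ∈ Set.Icc (0 : ℝ) 1)
    (fbar fdag : ℝ → ℝ)
    (hfbar : ∀ s, fbar s = ∑' m, p m * s ^ m)
    (hfdag : ∀ s, fdag s = (1 - α) * s ^ (k - 1) + α * s ^ k)
    (z : ℝ) (hz : z ∈ Set.Ioo (0 : ℝ) 1) (heq : fbar z = fdag z) :
    ∀ s ∈ Set.Icc z 1, fbar s ≤ fdag s :=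
  pgf_dominated_by_two_point_general p hp hpsum hp1 k hk α fbar fdag hfbar hfdag z hz heq
end

section
/- Let D be a nonnegative integer-valued random variable with pgf f, size-biased shifted pgf f̄(s) = f'(s)/E[D], p ∈ (0,1], and let z ∈ [0,1) be a root of s = f̄(1 − p + ps). Suppose E[D] = c/p and f̄ is not identically the identity at 1 (P(D̄ = 1) < 1). Then 1 − f(1 − p + pz) ≤ c/2. -/
/-!
Write `w = 1 - p + p z`. The derivative `g = f'` of the generating function is convex on `[0, 1]`,
with `g w = E[D] z = (c / p) z` by the fixed-point equation and `g 1 = E[D] = c / p`. Hence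
`1 - f w = ∫_w^1 g` is at most the trapezoid `(1 - w) (g w + g 1) / 2 = c (1 - z²) / 2 ≤ c / 2`.
-/

open MeasureTheory ProbabilityTheory

theorem ConvexOn.intervalIntegral_le_trapezoid {g : ℝ → ℝ} {a b : ℝ} (hab : a ≤ b)
    (hg : ConvexOn ℝ (Set.Icc a b) g) (hcont : ContinuousOn g (Set.Icc a b)) :
    ∫ x in a..b, g x ≤ (b - a) * (g a + g b) / 2 := by
  have hsub : ∫ x in a..b, g x = (b - a) * ∫ t in (0 : ℝ)..1, g (a + (b - a) * t) := by
    rw [← smul_eq_mul, intervalIntegral.smul_integral_comp_add_mul, mul_zero, mul_one, add_zero,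
      add_sub_cancel]
  have hmaps : Set.MapsTo (fun t => a + (b - a) * t) (Set.Icc 0 1) (Set.Icc a b) := by
    rintro t ⟨ht0, ht1⟩
    constructor <;> nlinarith
  have hchord : ∀ t ∈ Set.Icc (0 : ℝ) 1, g (a + (b - a) * t) ≤ (1 - t) * g a + t * g b := by
    rintro t ⟨ht0, ht1⟩
    rw [show a + (b - a) * t = (1 - t) • a + t • b by simp only [smul_eq_mul]; ring]
    exact hg.2 (Set.left_mem_Icc.2 hab) (Set.right_mem_Icc.2 hab) (sub_nonneg.2 ht1) ht0 (by ring)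
  have hint : IntervalIntegrable (fun t => g (a + (b - a) * t)) volume 0 1 :=
    (hcont.comp (by fun_prop) hmaps).intervalIntegrable_of_Icc zero_le_one
  calc ∫ x in a..b, g x
      ≤ (b - a) * ∫ t in (0 : ℝ)..1, (g a + (g b - g a) * t) := by
        rw [hsub]
        gcongr
        refine intervalIntegral.integral_mono_on zero_le_one hint
          ((by fun_prop : Continuous _).intervalIntegrable _ _) fun t ht => ?_
        linarith [hchord t ht]
    _ = (b - a) * (g a + g b) / 2 := by
        rw [intervalIntegral.integral_add intervalIntegrable_const
          ((continuous_const_mul _).intervalIntegrable _ _), intervalIntegral.integral_const_mul,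
          integral_id, intervalIntegral.integral_const, smul_eq_mul]
        ring

namespace ProbabilityTheory

variable {Ω : Type*} [MeasurableSpace Ω] {μ : Measure Ω} {D : Ω → ℕ}

noncomputable def pgf (μ : Measure Ω) (D : Ω → ℕ) (s : ℝ) : ℝ :=
  ∫ ω, s ^ D ω ∂μ

/-- `D ω - 1` truncates at `D ω = 0`, harmlessly since the factor `D ω` then vanishes. -/
noncomputable def pgfDeriv (μ : Measure Ω) (D : Ω → ℕ) (s : ℝ) : ℝ :=
  ∫ ω, (D ω : ℝ) * s ^ (D ω - 1) ∂μ

lemma norm_pow_le_one_of_mem_Icc {s : ℝ} (hs : s ∈ Set.Icc (-1) 1) (n : ℕ) : ‖s ^ n‖ ≤ 1 := by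
  rw [norm_pow, Real.norm_eq_abs]
  exact pow_le_one₀ (abs_nonneg s) (abs_le.2 hs)

lemma norm_natCast_mul_pow_pred_le {s : ℝ} (hs : s ∈ Set.Icc (-1) 1) (n : ℕ) :
    ‖(n : ℝ) * s ^ (n - 1)‖ ≤ n := by
  rw [norm_mul, Real.norm_natCast]
  exact mul_le_of_le_one_right n.cast_nonneg (norm_pow_le_one_of_mem_Icc hs _)

lemma aestronglyMeasurable_pow (hD : Measurable D) (s : ℝ) :
    AEStronglyMeasurable (fun ω => s ^ D ω) μ :=
  ((measurable_from_top (f := fun n : ℕ => s ^ n)).comp hD).aestronglyMeasurable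

lemma aestronglyMeasurable_natCast_mul_pow_pred (hD : Measurable D) (s : ℝ) :
    AEStronglyMeasurable (fun ω => (D ω : ℝ) * s ^ (D ω - 1)) μ :=
  ((measurable_from_top (f := fun n : ℕ => (n : ℝ) * s ^ (n - 1))).comp hD).aestronglyMeasurable

lemma integrable_pow [IsFiniteMeasure μ] (hD : Measurable D) {s : ℝ} (hs : s ∈ Set.Icc (-1) 1) :
    Integrable (fun ω => s ^ D ω) μ :=
  (integrable_const 1).mono' (aestronglyMeasurable_pow hD s)
    (.of_forall fun _ => norm_pow_le_one_of_mem_Icc hs _)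

lemma integrable_natCast_mul_pow_pred (hD : Measurable D)
    (hint : Integrable (fun ω => (D ω : ℝ)) μ) {s : ℝ} (hs : s ∈ Set.Icc (-1) 1) :
    Integrable (fun ω => (D ω : ℝ) * s ^ (D ω - 1)) μ :=
  hint.mono' (aestronglyMeasurable_natCast_mul_pow_pred hD s)
    (.of_forall fun _ => norm_natCast_mul_pow_pred_le hs _)

lemma pgf_one [IsProbabilityMeasure μ] : pgf μ D 1 = 1 := by
  simp [pgf]

lemma pgfDeriv_one : pgfDeriv μ D 1 = ∫ ω, (D ω : ℝ) ∂μ := by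
  simp [pgfDeriv]

lemma continuousOn_pgf [IsFiniteMeasure μ] (hD : Measurable D) :
    ContinuousOn (pgf μ D) (Set.Icc (-1) 1) :=
  continuousOn_of_dominated (fun s _ => aestronglyMeasurable_pow hD s)
    (fun _ hs => .of_forall fun _ => norm_pow_le_one_of_mem_Icc hs _) (integrable_const 1)
    (.of_forall fun _ => (continuous_pow _).continuousOn)

lemma continuousOn_pgfDeriv (hD : Measurable D) (hint : Integrable (fun ω => (D ω : ℝ)) μ) :
    ContinuousOn (pgfDeriv μ D) (Set.Icc (-1) 1) :=
  continuousOn_of_dominated (fun s _ => aestronglyMeasurable_natCast_mul_pow_pred hD s)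
    (fun _ hs => .of_forall fun _ => norm_natCast_mul_pow_pred_le hs _) hint
    (.of_forall fun _ => by fun_prop)

lemma hasDerivAt_pgf [IsFiniteMeasure μ] (hD : Measurable D)
    (hint : Integrable (fun ω => (D ω : ℝ)) μ) {s : ℝ} (hs : s ∈ Set.Ioo (-1) 1) :
    HasDerivAt (pgf μ D) (pgfDeriv μ D s) s := by
  have hnhds : Set.Icc (-1 : ℝ) 1 ∈ nhds s := Icc_mem_nhds hs.1 hs.2
  exact (hasDerivAt_integral_of_dominated_loc_of_deriv_le (F := fun x ω => x ^ D ω)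
    (F' := fun x ω => (D ω : ℝ) * x ^ (D ω - 1)) hnhds
    (.of_forall (aestronglyMeasurable_pow hD)) (integrable_pow hD (Set.Ioo_subset_Icc_self hs))
    (aestronglyMeasurable_natCast_mul_pow_pred hD s)
    (.of_forall fun _ _ hx => norm_natCast_mul_pow_pred_le hx _) hint
    (.of_forall fun ω x _ => hasDerivAt_pow (D ω) x)).2

lemma convexOn_pgfDeriv (hD : Measurable D) (hint : Integrable (fun ω => (D ω : ℝ)) μ) :
    ConvexOn ℝ (Set.Icc 0 1) (pgfDeriv μ D) :=
  integral_convexOn_of_integrand_ae (convex_Icc 0 1)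
    (.of_forall fun ω => ((convexOn_pow (D ω - 1)).subset Set.Icc_subset_Ici_self
      (convex_Icc 0 1)).smul (D ω).cast_nonneg)
    fun _ hs => integrable_natCast_mul_pow_pred hD hint ⟨by linarith [hs.1], hs.2⟩

lemma integral_pgfDeriv [IsFiniteMeasure μ] (hD : Measurable D)
    (hint : Integrable (fun ω => (D ω : ℝ)) μ) {a : ℝ} (ha : a ∈ Set.Icc (-1) 1) :
    ∫ s in a..1, pgfDeriv μ D s = pgf μ D 1 - pgf μ D a :=
  intervalIntegral.integral_eq_sub_of_hasDerivAt_of_le ha.2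
    ((continuousOn_pgf hD).mono (Set.Icc_subset_Icc_left ha.1))
    (fun _ hx => hasDerivAt_pgf hD hint ⟨by linarith [ha.1, hx.1], hx.2⟩)
    (((continuousOn_pgfDeriv hD hint).mono
      (Set.Icc_subset_Icc_left ha.1)).intervalIntegrable_of_Icc ha.2)

end ProbabilityTheory

theorem giant_at_most_half_mean_degree_general
    {Ω : Type*} [MeasureSpace Ω] [IsProbabilityMeasure (ℙ : Measure Ω)]
    (D : Ω → ℕ) (hD : Measurable D)
    (hint : Integrable (fun ω => (D ω : ℝ)))
    (c p : ℝ) (hc : 0 < c) (hp : p ∈ Set.Ioc (0 : ℝ) 1)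
    (hmean : ∫ ω, (D ω : ℝ) = c / p)
    (f fbar : ℝ → ℝ)
    (hf : ∀ s, f s = ∫ ω, s ^ D ω)
    (hfbar : ∀ s, fbar s = deriv f s / (c / p))
    (z : ℝ) (hz : z ∈ Set.Ico (0 : ℝ) 1)
    (hfix : z = fbar (1 - p + p * z)) :
    1 - f (1 - p + p * z) ≤ c / 2 := by
  obtain ⟨hp0, hp1⟩ := hp
  obtain ⟨hz0, hz1⟩ := hz
  have hf_eq : f = pgf ℙ D := funext hf
  set w := 1 - p + p * z with hw
  have hw0 : 0 ≤ w := by nlinarith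
  have hw1 : w < 1 := by nlinarith
  have hderiv_w : pgfDeriv ℙ D w = c / p * z := by
    have hderiv : deriv f w = pgfDeriv ℙ D w :=
      hf_eq ▸ (hasDerivAt_pgf hD hint ⟨by linarith, hw1⟩).deriv
    rw [hfix, hfbar, hderiv]
    field_simp
  have hsub : Set.Icc w 1 ⊆ Set.Icc 0 1 := Set.Icc_subset_Icc_left hw0
  calc 1 - f w = ∫ s in w..1, pgfDeriv ℙ D s := by
        rw [integral_pgfDeriv hD hint ⟨by linarith, hw1.le⟩, pgf_one, hf_eq]
    _ ≤ (1 - w) * (pgfDeriv ℙ D w + pgfDeriv ℙ D 1) / 2 :=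
        ConvexOn.intervalIntegral_le_trapezoid hw1.le
          ((convexOn_pgfDeriv hD hint).subset hsub (convex_Icc w 1))
          ((continuousOn_pgfDeriv hD hint).mono
            (hsub.trans (Set.Icc_subset_Icc_left (by norm_num))))
    _ = c * (1 - z ^ 2) / 2 := by
        rw [hderiv_w, pgfDeriv_one, hmean, hw]
        field_simp
        ring
    _ ≤ c / 2 := by nlinarith [sq_nonneg z]

theorem giant_at_most_half_mean_degree
    {Ω : Type*} [MeasureSpace Ω] [IsProbabilityMeasure (ℙ : Measure Ω)]
    (D : Ω → ℕ) (hD : Measurable D)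
    (hint : Integrable (fun ω => (D ω : ℝ)))
    (c p : ℝ) (hc : 0 < c) (hp : p ∈ Set.Ioc (0 : ℝ) 1)
    (hmean : ∫ ω, (D ω : ℝ) = c / p)
    (f fbar : ℝ → ℝ)
    (hf : ∀ s, f s = ∫ ω, s ^ D ω)
    (hfbar : ∀ s, fbar s = deriv f s / (c / p))
    (hnotdeg : (ℙ {ω | D ω = 1}).toReal < c / p)
    (z : ℝ) (hz : z ∈ Set.Ico (0 : ℝ) 1)
    (hfix : z = fbar (1 - p + p * z)) :
    1 - f (1 - p + p * z) ≤ c / 2 :=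
  giant_at_most_half_mean_degree_general D hD hint c p hc hp hmean f fbar hf hfbar z hz hfix
end

section
/- Let X be a nonnegative random variable with mean μ ∈ (0, μ_c], where μ_c is the largest root of 2λ = e^{λ−1/2}, and let f(s) = E[e^{-X(1−s)}]. Let z_D be the smallest root of s = E[X e^{-X(1-s)}]/μ in [0,1], and q_D = f(z_D). Then q_D ≥ q*, where q* = 1 − (μ/μ_c)(1 − z*) and z* = 1/(2μ_c) is the root in (0,1) of z = e^{-μ_c(1−z)}. -/
/-!
Write `z = z_D`, `L = -log z` and `y = (1 - z) X`. For `y ≥ 0` one has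
`L² (1 - e^{-y}) ≤ (e^L - 1 - L) y e^{-y} + (L - 1 + e^{-L}) y`, with equality at `y = 0` and
`y = L`, the support of the extremal two-point law. Taking expectations and using the fixed-point
equation `E[X e^{-y}] = μ z` gives `q_D ≥ 1 - μ (1 - e^{-L})² / L`, and `(1 - e^{-L})² / L` is
maximal at the positive root `L = μ_c - 1/2` of `e^L = 2L + 1`, where `e^{-L} = 1 / (2 μ_c) = z*`
and the maximum is `(1 - z*) / μ_c`.
-/

open MeasureTheory ProbabilityTheory Real Set

theorem Real.two_sub_mul_exp_le_two_add {x : ℝ} (hx : 0 ≤ x) : (2 - x) * exp x ≤ 2 + x := by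
  have hmono : MonotoneOn (fun y => (2 + y) * exp (-y) + y) (Ici 0) := by
    refine monotoneOn_of_hasDerivWithinAt_nonneg (f' := fun y => 1 - (1 + y) * exp (-y))
      (convex_Ici 0) (by fun_prop) (fun y _ => ?_) fun y _ => ?_
    · exact ((((hasDerivAt_id y).const_add 2).mul (hasDerivAt_neg y).exp).add
        (hasDerivAt_id y)).hasDerivWithinAt.congr_deriv (by simp only [id]; ring)
    · have h := mul_le_mul_of_nonneg_right (add_one_le_exp y) (exp_pos (-y)).le
      rw [← exp_add, add_neg_cancel, exp_zero] at h
      simp only [sub_nonneg]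
      linarith
  have h := hmono self_mem_Ici hx hx
  have hexp : exp (-x) * exp x = 1 := by rw [← exp_add, neg_add_cancel, exp_zero]
  simp only [add_zero, neg_zero, exp_zero, mul_one] at h
  nlinarith [exp_pos x]

theorem isMaxOn_Ioi_of_hasDerivAt {f f' : ℝ → ℝ} {a b : ℝ} (hab : a < b)
    (hf : ∀ x ∈ Ioi a, HasDerivAt f (f' x) x) (h₀ : ∀ x ∈ Ioo a b, 0 ≤ f' x)
    (h₁ : ∀ x ∈ Ioi b, f' x ≤ 0) : IsMaxOn f (Ioi a) b := by
  have hderiv : ∀ x ∈ Ioi a, deriv f x = f' x := fun x hx => (hf x hx).deriv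
  refine isMaxOn_Ioi_of_deriv (hf b hab).continuousAt
    (fun x hx => (hf x hx.1).differentiableAt.differentiableWithinAt)
    (fun x hx => (hf x (hab.trans hx)).differentiableAt.differentiableWithinAt)
    (fun x hx => ?_) fun x hx => ?_
  · rw [hderiv x hx.1]; exact h₀ x hx
  · rw [hderiv x (hab.trans hx)]; exact h₁ x hx

theorem antitoneOn_sub_one_add_exp_neg_div_sq :
    AntitoneOn (fun y => (y - 1 + exp (-y)) / y ^ 2) (Ioi 0) := by
  have hderiv (y : ℝ) (hy : y ≠ 0) : HasDerivAt (fun y => (y - 1 + exp (-y)) / y ^ 2)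
      (((1 - exp (-y)) * y ^ 2 - (y - 1 + exp (-y)) * (2 * y)) / (y ^ 2) ^ 2) y :=
    ((((hasDerivAt_id y).sub_const 1).add (hasDerivAt_neg y).exp).div (hasDerivAt_pow 2 y)
      (pow_ne_zero 2 hy)).congr_deriv (by simp only [id, Pi.add_apply]; ring)
  refine antitoneOn_of_hasDerivWithinAt_nonpos (convex_Ioi 0)
    (fun y hy => (hderiv y (ne_of_gt hy)).continuousAt.continuousWithinAt)
    (fun y hy => (hderiv y (ne_of_gt (interior_subset hy))).hasDerivWithinAt) fun y hy => ?_
  rw [interior_Ioi] at hy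
  have hy : 0 < y := hy
  have hpade : 2 - y ≤ (2 + y) * exp (-y) := by
    have h := mul_le_mul_of_nonneg_right (two_sub_mul_exp_le_two_add hy.le) (exp_pos (-y)).le
    rwa [mul_assoc, ← exp_add, add_neg_cancel, exp_zero, mul_one] at h
  apply div_nonpos_of_nonpos_of_nonneg _ (by positivity)
  nlinarith

theorem sq_mul_one_sub_exp_neg_le {L y : ℝ} (hL : 0 < L) (hy : 0 ≤ y) :
    L ^ 2 * (1 - exp (-y)) ≤ (exp L - 1 - L) * (y * exp (-y)) + (L - 1 + exp (-L)) * y := by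
  rcases hy.eq_or_lt with rfl | hy
  · simp
  set k : ℝ → ℝ := fun y => (y - 1 + exp (-y)) / y ^ 2
  -- After division by `y e^{-y}` the claim is `ψ y ≤ ψ L`, and `ψ'` has the sign of `k z - k L`.
  set ψ : ℝ → ℝ := fun z => L ^ 2 * ((exp z - 1) / z) - (L - 1 + exp (-L)) * exp z
  have hψ : ∀ z ∈ Ioi (0 : ℝ), HasDerivAt ψ (exp z * L ^ 2 * (k z - k L)) z := by
    intro z hz
    have hz : z ≠ 0 := ne_of_gt hz
    refine (((((hasDerivAt_exp z).sub_const 1).div (hasDerivAt_id z) hz).const_mul (L ^ 2)).sub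
      ((hasDerivAt_exp z).const_mul _)).congr_deriv ?_
    simp only [k, id, exp_neg]
    field_simp
    ring
  have hmax := isMaxOn_Ioi_of_hasDerivAt hL hψ
    (fun z hz => mul_nonneg (by positivity) (sub_nonneg.2 <|
      antitoneOn_sub_one_add_exp_neg_div_sq hz.1 hL hz.2.le))
    (fun z hz => mul_nonpos_of_nonneg_of_nonpos (by positivity) (sub_nonpos.2 <|
      antitoneOn_sub_one_add_exp_neg_div_sq hL (hL.trans hz) (le_of_lt hz)))
  calc L ^ 2 * (1 - exp (-y)) = ψ y * (y * exp (-y)) + (L - 1 + exp (-L)) * y := by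
        simp only [ψ, exp_neg]
        field_simp
        ring
    _ ≤ ψ L * (y * exp (-y)) + (L - 1 + exp (-L)) * y := by
        gcongr
        exact hmax hy
    _ = (exp L - 1 - L) * (y * exp (-y)) + (L - 1 + exp (-L)) * y := by
        simp only [ψ, exp_neg]
        field_simp
        ring

section Integrals

variable {Ω : Type*} [MeasurableSpace Ω] {P : Measure Ω} {X : Ω → ℝ} {t : ℝ}

theorem norm_exp_neg_mul_le_one (hX0 : ∀ ω, 0 ≤ X ω) (ht : 0 ≤ t) :
    ∀ᵐ ω ∂P, ‖exp (-(X ω) * t)‖ ≤ 1 :=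
  ae_of_all _ fun ω => by
    rw [norm_of_nonneg (exp_pos _).le, exp_le_one_iff, neg_mul, neg_nonpos]
    exact mul_nonneg (hX0 ω) ht

theorem MeasureTheory.Integrable.exp_neg_mul [IsFiniteMeasure P] (hX : Integrable X P)
    (hX0 : ∀ ω, 0 ≤ X ω) (ht : 0 ≤ t) : Integrable (fun ω => exp (-(X ω) * t)) P :=
  (integrable_const 1).mono'
    (continuous_exp.comp_aestronglyMeasurable (hX.aestronglyMeasurable.neg.mul_const t))
    (norm_exp_neg_mul_le_one hX0 ht)

theorem MeasureTheory.Integrable.mul_exp_neg_mul (hX : Integrable X P) (hX0 : ∀ ω, 0 ≤ X ω)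
    (ht : 0 ≤ t) :
    Integrable (fun ω => X ω * exp (-(X ω) * t)) P :=
  hX.mul_bdd (continuous_exp.comp_aestronglyMeasurable (hX.aestronglyMeasurable.neg.mul_const t))
    (norm_exp_neg_mul_le_one hX0 ht)

theorem sq_mul_one_sub_integral_exp_neg_mul_le [IsProbabilityMeasure P] (hX : Integrable X P)
    (hX0 : ∀ ω, 0 ≤ X ω) {L : ℝ} (hL : 0 < L) (ht : 0 ≤ t) :
    L ^ 2 * (1 - ∫ ω, exp (-(X ω) * t) ∂P) ≤
      (exp L - 1 - L) * t * ∫ ω, X ω * exp (-(X ω) * t) ∂P +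
        (L - 1 + exp (-L)) * t * ∫ ω, X ω ∂P := by
  have hE := hX.exp_neg_mul hX0 ht
  have hXE := hX.mul_exp_neg_mul hX0 ht
  have h : ∫ ω, L ^ 2 * (1 - exp (-(X ω) * t)) ∂P ≤
      ∫ ω, (exp L - 1 - L) * t * (X ω * exp (-(X ω) * t)) +
        (L - 1 + exp (-L)) * t * X ω ∂P := by
    refine integral_mono (((integrable_const 1).sub hE).const_mul _)
      ((hXE.const_mul _).add (hX.const_mul _)) fun ω => ?_
    have h := sq_mul_one_sub_exp_neg_le hL (mul_nonneg (hX0 ω) ht)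
    simp only [neg_mul] at h ⊢
    linear_combination h
  rwa [integral_const_mul, integral_sub (integrable_const 1) hE, integral_add
    (hXE.const_mul _) (hX.const_mul _), integral_const_mul, integral_const_mul, integral_const,
    probReal_univ, one_smul] at h

theorem integral_mul_exp_neg_mul_pos (hX : Integrable X P) (hX0 : ∀ ω, 0 ≤ X ω) (ht : 0 ≤ t)
    (hpos : 0 < ∫ ω, X ω ∂P) : 0 < ∫ ω, X ω * exp (-(X ω) * t) ∂P := by
  have hsupp : Function.support (fun ω => X ω * exp (-(X ω) * t)) = Function.support X := by
    simp [Function.support_mul, (exp_pos _).ne']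
  rw [integral_pos_iff_support_of_nonneg hX0 hX] at hpos
  rwa [integral_pos_iff_support_of_nonneg (fun ω => mul_nonneg (hX0 ω) (exp_pos _).le)
    (hX.mul_exp_neg_mul hX0 ht), hsupp]

theorem one_sub_integral_exp_neg_mul_le [IsProbabilityMeasure P] (hX : Integrable X P)
    (hX0 : ∀ ω, 0 ≤ X ω) {L : ℝ} (hL : 0 < L)
    (hfix : ∫ ω, X ω * exp (-(X ω) * (1 - exp (-L))) ∂P = (∫ ω, X ω ∂P) * exp (-L)) :
    1 - ∫ ω, exp (-(X ω) * (1 - exp (-L))) ∂P ≤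
      (∫ ω, X ω ∂P) * ((1 - exp (-L)) ^ 2 / L) := by
  have ht : 0 ≤ 1 - exp (-L) := sub_nonneg.2 (exp_le_one_iff.2 (by linarith))
  have h := sq_mul_one_sub_integral_exp_neg_mul_le hX hX0 hL ht
  have hexp : exp L * exp (-L) = 1 := by rw [← exp_add, add_neg_cancel, exp_zero]
  rw [hfix] at h
  rw [mul_div_assoc', le_div_iff₀ hL]
  refine le_of_mul_le_mul_left ?_ hL
  linear_combination h + (∫ ω, X ω ∂P) * (1 - exp (-L)) * hexp

end Integrals

theorem one_sub_exp_neg_sq_div_le {a x : ℝ} (ha : 0 < a) (hroot : exp a = 2 * a + 1)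
    (hx : 0 < x) : (1 - exp (-x)) ^ 2 / x ≤ (1 - exp (-a)) ^ 2 / a := by
  have hsecant {x y : ℝ} (hx : 0 < x) (hxy : x ≤ y) : (exp x - 1) / x ≤ (exp y - 1) / y := by
    simpa using convexOn_exp.secant_mono (mem_univ 0) (mem_univ x) (mem_univ y) hx.ne'
      (hx.trans_le hxy).ne' hxy
  have hsecant_a : (exp a - 1) / a = 2 := by rw [hroot]; field_simp; ring
  have hderiv : ∀ y ∈ Ioi (0 : ℝ), HasDerivAt (fun y => (1 - exp (-y)) ^ 2 / y)
      ((1 - exp (-y)) * exp (-y) * (2 * y + 1 - exp y) / y ^ 2) y := by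
    intro y hy
    have hy : y ≠ 0 := ne_of_gt hy
    refine ((((hasDerivAt_neg y).exp.const_sub 1).pow 2).div (hasDerivAt_id y) hy).congr_deriv ?_
    have hexp : exp (-y) * exp y = 1 := by rw [← exp_add, neg_add_cancel, exp_zero]
    simp only [Pi.pow_apply, id]
    field_simp
    linear_combination (1 - exp (-y)) * hexp
  have hfactor {y : ℝ} (hy : 0 < y) : 0 ≤ (1 - exp (-y)) * exp (-y) / y ^ 2 :=
    div_nonneg (mul_nonneg (sub_nonneg.2 (exp_le_one_iff.2 (by linarith))) (exp_pos _).le)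
      (sq_nonneg y)
  refine isMaxOn_Ioi_of_hasDerivAt ha hderiv (fun y hy => ?_) (fun y hy => ?_) hx
  · have h := hsecant hy.1 hy.2.le
    rw [hsecant_a, div_le_iff₀ hy.1] at h
    rw [mul_div_right_comm]
    exact mul_nonneg (hfactor hy.1) (by linarith)
  · have h := hsecant ha (le_of_lt hy)
    rw [hsecant_a, le_div_iff₀ (ha.trans hy)] at h
    rw [mul_div_right_comm]
    exact mul_nonpos_of_nonneg_of_nonpos (hfactor (ha.trans hy)) (by linarith)

theorem exists_one_le_two_mul_eq_exp_sub_half :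
    ∃ x : ℝ, 1 ≤ x ∧ 2 * x = exp (x - 1 / 2) := by
  have h1 : exp ((1 : ℝ) - 1 / 2) - 2 * 1 ≤ 0 := by
    have := exp_bound_div_one_sub_of_interval (x := 1 / 2) (by norm_num) (by norm_num)
    norm_num at this ⊢
    linarith
  have h3 : 0 ≤ exp ((3 : ℝ) - 1 / 2) - 2 * 3 := by
    have := quadratic_le_exp_of_nonneg (x := 5 / 2) (by norm_num)
    norm_num at this ⊢
    linarith
  obtain ⟨x, hx, hroot⟩ := intermediate_value_Icc (f := fun x => exp (x - 1 / 2) - 2 * x)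
    (by norm_num : (1 : ℝ) ≤ 3) (by fun_prop) ⟨h1, h3⟩
  exact ⟨x, hx.1, by linarith [hroot]⟩

theorem one_sub_exp_neg_sq_div_le_of_two_mul_eq_exp {c x : ℝ} (hc : 1 / 2 < c)
    (hroot : 2 * c = exp (c - 1 / 2)) (hx : 0 < x) :
    (1 - exp (-x)) ^ 2 / x ≤ (1 - 1 / (2 * c)) / c := by
  have h := one_sub_exp_neg_sq_div_le (a := c - 1 / 2) (by linarith) (by rw [← hroot]; ring) hx
  have hc' : c - 1 / 2 ≠ 0 := by linarith
  have hc'' : c ≠ 0 := by linarith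
  refine h.trans_eq ?_
  rw [exp_neg, ← hroot]
  field_simp

theorem poissonian_giant_max_small_mean_general
    {Ω : Type*} [MeasureSpace Ω] [IsProbabilityMeasure (ℙ : Measure Ω)]
    (X : Ω → ℝ) (hXpos : ∀ ω, 0 ≤ X ω)
    (hXint : Integrable X)
    (μc : ℝ) (hμc_root : 2 * μc = Real.exp (μc - 1 / 2))
    (hμc_max : ∀ x : ℝ, 2 * x = Real.exp (x - 1 / 2) → x ≤ μc)
    (μ : ℝ) (hμ : μ = ∫ ω, X ω) (hμpos : 0 < μ)
    (f fbar : ℝ → ℝ)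
    (hf : ∀ s, f s = ∫ ω, Real.exp (-(X ω) * (1 - s)))
    (hfbar : ∀ s, fbar s = (∫ ω, X ω * Real.exp (-(X ω) * (1 - s))) / μ)
    (zD : ℝ) (hzD : zD ∈ Set.Icc (0 : ℝ) 1) (hzfix : zD = fbar zD) :
    f zD ≥ 1 - (μ / μc) * (1 - 1 / (2 * μc)) := by
  obtain ⟨x₀, hx₀, hx₀_root⟩ := exists_one_le_two_mul_eq_exp_sub_half
  have hμc : 1 ≤ μc := hx₀.trans (hμc_max x₀ hx₀_root)
  have hfix : ∫ ω, X ω * exp (-(X ω) * (1 - zD)) = μ * zD := by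
    rw [hfbar, eq_div_iff hμpos.ne'] at hzfix
    linarith
  rcases hzD.2.eq_or_lt with rfl | hz1
  · have hz_star : 1 / (2 * μc) ≤ 1 := div_le_one_of_le₀ (by linarith) (by linarith)
    rw [hf, sub_self]
    simp only [mul_zero, exp_zero, integral_const, probReal_univ, one_smul]
    exact sub_le_self _ (mul_nonneg (by positivity) (sub_nonneg.2 hz_star))
  have hz0 : 0 < zD := by
    have := integral_mul_exp_neg_mul_pos hXint hXpos (sub_nonneg.2 hz1.le) (hμ ▸ hμpos)
    exact pos_of_mul_pos_right (hfix ▸ this) hμpos.le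
  obtain ⟨L, hL, rfl⟩ : ∃ L, 0 < L ∧ exp (-L) = zD :=
    ⟨-log zD, neg_pos.2 (log_neg hz0 hz1), by rw [neg_neg, exp_log hz0]⟩
  have hbound := one_sub_integral_exp_neg_mul_le hXint hXpos hL (by rw [hfix, ← hμ])
  rw [← hμ, ← hf] at hbound
  have hmax := one_sub_exp_neg_sq_div_le_of_two_mul_eq_exp (by linarith) hμc_root hL
  calc 1 - μ / μc * (1 - 1 / (2 * μc)) = 1 - μ * ((1 - 1 / (2 * μc)) / μc) := by ring
    _ ≤ 1 - μ * ((1 - exp (-L)) ^ 2 / L) := by gcongr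
    _ ≤ f (exp (-L)) := by linarith

theorem poissonian_giant_max_small_mean
    {Ω : Type*} [MeasureSpace Ω] [IsProbabilityMeasure (ℙ : Measure Ω)]
    (X : Ω → ℝ) (hXmeas : Measurable X) (hXpos : ∀ ω, 0 ≤ X ω)
    (hXint : Integrable X)
    (μc : ℝ) (hμc_root : 2 * μc = Real.exp (μc - 1 / 2))
    (hμc_max : ∀ x : ℝ, 2 * x = Real.exp (x - 1 / 2) → x ≤ μc)
    (μ : ℝ) (hμ : μ = ∫ ω, X ω) (hμpos : 0 < μ) (hμle : μ ≤ μc)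
    (f fbar : ℝ → ℝ)
    (hf : ∀ s, f s = ∫ ω, Real.exp (-(X ω) * (1 - s)))
    (hfbar : ∀ s, fbar s = (∫ ω, X ω * Real.exp (-(X ω) * (1 - s))) / μ)
    (zD : ℝ) (hzD : zD ∈ Set.Icc (0 : ℝ) 1) (hzfix : zD = fbar zD)
    (hzmin : ∀ s ∈ Set.Icc (0 : ℝ) 1, s = fbar s → zD ≤ s) :
    f zD ≥ 1 - (μ / μc) * (1 - 1 / (2 * μc)) :=
  poissonian_giant_max_small_mean_general X hXpos hXint μc hμc_root hμc_max μ hμ hμpos f fbar hf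
    hfbar zD hzD hzfix
end
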